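/- arXiv:0910.4504 — 3 statements merged into one kernel-verified Lean document; each statement's English description precedes it below -/
import Mathlib

section
/- Let |ψ₁⟩, …, |ψ_k⟩ ∈ ℂ⁴ be unit vectors and p₁, …, p_k ≥ 0 weights, and set ρ = Σᵢ pᵢ |ψᵢ⟩⟨ψᵢ| and ρ̃ = J ρ̄ J. Define the k×k matrices ρ̃′ with entries ρ̃′_{mj} = √(p_m p_j) ⟨ψ_m| ρ̃ |ψ_j⟩ and r′ with entries r′_{ij} = √(p_i p_j) ⟨ψ_i| J |ψ_j*⟩ (where |ψ_j*⟩ is the entrywise complex conjugate of |ψ_j⟩). Then ρ̃′ = r′ (r′)† , where (r′)† is the conjugate transpose of r′. -/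
/-!
Absorb the weights into the vectors: with `Φ` the `4 × k` matrix whose columns are `√pᵢ ψᵢ`,
`ρ = Φ Φᴴ`, `ρ̃′ = Φᴴ ρ̃ Φ` and `r′ = Φᴴ J Φ̄`. Since `ρ̄ = Φ̄ Φᵀ` and `J` is Hermitian,
`ρ̃ = (J Φ̄)(J Φ̄)ᴴ`, hence `ρ̃′ = (Φᴴ J Φ̄)(Φᴴ J Φ̄)ᴴ = r′ r′ᴴ`.
-/

open Matrix

noncomputable section

/-- `J = σ_y ⊗ σ_y` as a complex 4×4 matrix (standard product basis). -/
def Jc : Matrix (Fin 4) (Fin 4) ℂ :=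
  !![0, 0, 0, -1; 0, 0, 1, 0; 0, 1, 0, 0; -1, 0, 0, 0]

namespace Matrix

variable {l m n : Type*} [Fintype m] {α : Type*}

def spinFlip [CommSemiring α] [StarRing α] (J ρ : Matrix m m α) : Matrix m m α :=
  J * ρ.map (starRingEnd α) * J

theorem mul_conjTranspose_eq_sum_vecMulVec [NonUnitalNonAssocSemiring α] [StarRing α]
    (A : Matrix l m α) : A * Aᴴ = ∑ i, vecMulVec (fun a => A a i) (star fun a => A a i) := by
  ext a b
  simp [mul_apply, Matrix.sum_apply, vecMulVec_apply]

theorem conjTranspose_mul_mul_apply [NonUnitalCommSemiring α] [StarRing α]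
    (A : Matrix m l α) (M : Matrix m m α) (B : Matrix m n α) (i : l) (j : n) :
    (Aᴴ * M * B) i j = star (fun a => A a i) ⬝ᵥ (M *ᵥ fun a => B a j) := by
  rw [Matrix.mul_assoc]
  simp [mul_apply, dotProduct, mulVec, Finset.mul_sum]

theorem conjTranspose_mul_spinFlip_mul [CommSemiring α] [StarRing α] [Fintype n]
    {J : Matrix m m α} (hJ : J.IsHermitian) (Φ : Matrix m n α) :
    Φᴴ * spinFlip J (Φ * Φᴴ) * Φ
      = (Φᴴ * J * Φ.map (starRingEnd α)) * (Φᴴ * J * Φ.map (starRingEnd α))ᴴ := by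
  have hconj : Φᴴ.map (starRingEnd α) = Φᵀ := by ext; simp [starRingEnd_apply]
  have hconj' : (Φ.map (starRingEnd α))ᴴ = Φᵀ := by ext; simp [starRingEnd_apply]
  rw [spinFlip, Matrix.map_mul, hconj, conjTranspose_mul, conjTranspose_mul, hconj', hJ.eq,
    conjTranspose_conjTranspose]
  simp only [Matrix.mul_assoc]

end Matrix

theorem isHermitian_Jc : Jc.IsHermitian := by
  ext i j
  fin_cases i <;> fin_cases j <;> simp [Jc]

theorem spinFlipped_gram_factorization_general
    (k : ℕ) (p : Fin k → ℝ) (hp : ∀ i, 0 ≤ p i)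
    (ψ : Fin k → Fin 4 → ℂ)
    (ρ : Matrix (Fin 4) (Fin 4) ℂ)
    (hρ : ρ = ∑ i, (p i : ℂ) • vecMulVec (ψ i) (star (ψ i)))
    (ρt : Matrix (Fin 4) (Fin 4) ℂ)
    (hρt : ρt = Jc * ρ.map (starRingEnd ℂ) * Jc)
    (ρt' : Matrix (Fin k) (Fin k) ℂ)
    (hρt' : ∀ m j, ρt' m j = (Real.sqrt (p m * p j) : ℂ) * (star (ψ m) ⬝ᵥ (ρt *ᵥ ψ j)))
    (r' : Matrix (Fin k) (Fin k) ℂ)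
    (hr' : ∀ i j, r' i j = (Real.sqrt (p i * p j) : ℂ) * (star (ψ i) ⬝ᵥ (Jc *ᵥ star (ψ j)))) :
    ρt' = r' * r'ᴴ := by
  set Φ : Matrix (Fin 4) (Fin k) ℂ := of fun a i => (√(p i) : ℂ) * ψ i a
  have hsqrt (i j) : (√(p i * p j) : ℂ) = √(p i) * √(p j) := by
    rw [Real.sqrt_mul (hp i), Complex.ofReal_mul]
  have hρ_eq : ρ = Φ * Φᴴ := by
    rw [hρ, mul_conjTranspose_eq_sum_vecMulVec]
    refine Finset.sum_congr rfl fun i _ => ?_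
    change _ = vecMulVec ((√(p i) : ℂ) • ψ i) (star ((√(p i) : ℂ) • ψ i))
    rw [star_smul, smul_vecMulVec, vecMulVec_smul, smul_smul, Complex.star_def,
      Complex.conj_ofReal, ← Complex.ofReal_mul, Real.mul_self_sqrt (hp i)]
  have hρt'_eq : ρt' = Φᴴ * ρt * Φ := by
    ext m j
    rw [hρt', conjTranspose_mul_mul_apply, hsqrt]
    change _ = star ((√(p m) : ℂ) • ψ m) ⬝ᵥ ρt *ᵥ ((√(p j) : ℂ) • ψ j)
    simp only [star_smul, smul_dotProduct, mulVec_smul, dotProduct_smul, Complex.star_def,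
      Complex.conj_ofReal, smul_eq_mul]
    ring
  have hr'_eq : r' = Φᴴ * Jc * Φ.map (starRingEnd ℂ) := by
    ext i j
    rw [hr', conjTranspose_mul_mul_apply, hsqrt]
    change _ = star ((√(p i) : ℂ) • ψ i) ⬝ᵥ Jc *ᵥ star ((√(p j) : ℂ) • ψ j)
    simp only [star_smul, smul_dotProduct, mulVec_smul, dotProduct_smul, Complex.star_def,
      Complex.conj_ofReal, smul_eq_mul]
    ring
  rw [hρt'_eq, hr'_eq, hρt, hρ_eq]
  exact conjTranspose_mul_spinFlip_mul isHermitian_Jc Φ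

/-- For `ρ = Σᵢ pᵢ |ψᵢ⟩⟨ψᵢ|` and `ρ̃ = J ρ̄ J`, the matrix `ρ̃′` with entries
`ρ̃′_{mj} = √(p_m p_j) ⟨ψ_m| ρ̃ |ψ_j⟩` equals `r′ (r′)†`, where
`r′_{ij} = √(p_i p_j) ⟨ψ_i| J |ψ_j*⟩`. -/
theorem spinFlipped_gram_factorization
    (k : ℕ) (p : Fin k → ℝ) (hp : ∀ i, 0 ≤ p i)
    (ψ : Fin k → Fin 4 → ℂ) (hψ : ∀ i, star (ψ i) ⬝ᵥ ψ i = 1)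
    (ρ : Matrix (Fin 4) (Fin 4) ℂ)
    (hρ : ρ = ∑ i, (p i : ℂ) • vecMulVec (ψ i) (star (ψ i)))
    (ρt : Matrix (Fin 4) (Fin 4) ℂ)
    (hρt : ρt = Jc * ρ.map (starRingEnd ℂ) * Jc)
    (ρt' : Matrix (Fin k) (Fin k) ℂ)
    (hρt' : ∀ m j, ρt' m j = (Real.sqrt (p m * p j) : ℂ) * (star (ψ m) ⬝ᵥ (ρt *ᵥ ψ j)))
    (r' : Matrix (Fin k) (Fin k) ℂ)
    (hr' : ∀ i j, r' i j = (Real.sqrt (p i * p j) : ℂ) * (star (ψ i) ⬝ᵥ (Jc *ᵥ star (ψ j)))) :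
    ρt' = r' * r'ᴴ :=
  spinFlipped_gram_factorization_general k p hp ψ ρ hρ ρt hρt ρt' hρt' r' hr'

end
end

section
/- Let |ψ₁⟩, …, |ψ₄⟩ ∈ ℂ⁴ be linearly independent unit vectors and p₁, …, p₄ > 0, and set ρ = Σᵢ pᵢ |ψᵢ⟩⟨ψᵢ| and ρ̃ = J ρ̄ J. Define the 4×4 matrix r′ with entries r′_{ij} = √(p_i p_j) ⟨ψ_i| J |ψ_j*⟩ (where |ψ_j*⟩ is the entrywise complex conjugate of |ψ_j⟩). Then the characteristic polynomial of ρρ̃ equals the characteristic polynomial of r′ (r′)†. -/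
/-!
Let `A` be the matrix whose columns are `√pᵢ ψᵢ`. Then `ρ = A Aᴴ` and `r′ = Aᴴ J Ā`, so with
`Jᴴ = J` we get `ρ ρ̃ = A · (Aᴴ J Ā Aᵀ J)` and `r′ r′ᴴ = (Aᴴ J Ā Aᵀ J) · A`; the two products
`XY` and `YX` of square matrices have the same characteristic polynomial.
-/

open Matrix

noncomputable section

namespace Matrix

variable {m n R : Type*} [CommRing R] [StarRing R]

theorem map_star_conjTranspose (A : Matrix m n R) : Aᴴ.map (starRingEnd R) = Aᵀ := by
  ext; simp [starRingEnd_apply]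

theorem conjTranspose_map_star (A : Matrix m n R) : (A.map (starRingEnd R))ᴴ = Aᵀ := by
  ext; simp [starRingEnd_apply]

theorem charpoly_mul_conjTranspose_mul_map_star [Fintype n] [DecidableEq n]
    (A J : Matrix n n R) (hJ : Jᴴ = J) :
    ((A * Aᴴ) * (J * (A * Aᴴ).map (starRingEnd R) * J)).charpoly
      = ((Aᴴ * J * A.map (starRingEnd R)) * (Aᴴ * J * A.map (starRingEnd R))ᴴ).charpoly := by
  rw [Matrix.map_mul, map_star_conjTranspose]
  simp only [conjTranspose_mul, conjTranspose_conjTranspose, conjTranspose_map_star, hJ]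
  simpa only [Matrix.mul_assoc] using
    charpoly_mul_comm A (Aᴴ * J * A.map (starRingEnd R) * Aᵀ * J)

end Matrix

theorem Jc_conjTranspose : Jcᴴ = Jc := by
  ext i j
  fin_cases i <;> fin_cases j <;> simp [Jc]

section Ensemble

variable {ι n : Type*}

def ensembleMatrix (p : ι → ℝ) (ψ : ι → n → ℂ) : Matrix n ι ℂ :=
  of fun k i => (√(p i) : ℂ) * ψ i k

theorem ensembleMatrix_mul_conjTranspose [Fintype ι] {p : ι → ℝ} (hp : ∀ i, 0 ≤ p i)
    (ψ : ι → n → ℂ) :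
    ensembleMatrix p ψ * (ensembleMatrix p ψ)ᴴ
      = ∑ i, (p i : ℂ) • vecMulVec (ψ i) (star (ψ i)) := by
  ext k l
  simp only [mul_apply, ensembleMatrix, conjTranspose_apply, of_apply, Matrix.sum_apply,
    Matrix.smul_apply, vecMulVec_apply, Pi.star_apply, smul_eq_mul, star_mul', RCLike.star_def,
    Complex.conj_ofReal]
  refine Finset.sum_congr rfl fun i _ => ?_
  have hsq : (√(p i) : ℂ) * √(p i) = p i := by
    rw [← Complex.ofReal_mul, Real.mul_self_sqrt (hp i)]
  linear_combination ψ i k * starRingEnd ℂ (ψ i l) * hsq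

theorem conjTranspose_ensembleMatrix_mul_mul_map_apply [Fintype n] {p : ι → ℝ}
    (hp : ∀ i, 0 ≤ p i) (ψ : ι → n → ℂ) (M : Matrix n n ℂ) (i j : ι) :
    ((ensembleMatrix p ψ)ᴴ * M * (ensembleMatrix p ψ).map (starRingEnd ℂ)) i j
      = (√(p i * p j) : ℂ) * (star (ψ i) ⬝ᵥ (M *ᵥ star (ψ j))) := by
  rw [Real.sqrt_mul (hp i)]
  simp only [mul_apply, ensembleMatrix, conjTranspose_apply, of_apply, map_apply, dotProduct,
    mulVec, Pi.star_apply, Complex.star_def, map_mul, Complex.conj_ofReal, Complex.ofReal_mul,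
    Finset.mul_sum, Finset.sum_mul]
  rw [Finset.sum_comm]
  refine Finset.sum_congr rfl fun k _ => Finset.sum_congr rfl fun l _ => ?_
  ring

end Ensemble

theorem charpoly_rho_rhoTilde_eq_general
    (ψ : Fin 4 → Fin 4 → ℂ)
    (p : Fin 4 → ℝ) (hp : ∀ i, 0 < p i)
    (ρ : Matrix (Fin 4) (Fin 4) ℂ)
    (hρ : ρ = ∑ i, (p i : ℂ) • vecMulVec (ψ i) (star (ψ i)))
    (r' : Matrix (Fin 4) (Fin 4) ℂ)
    (hr' : ∀ i j, r' i j = (Real.sqrt (p i * p j) : ℂ) * (star (ψ i) ⬝ᵥ (Jc *ᵥ star (ψ j)))) :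
    (ρ * (Jc * ρ.map (starRingEnd ℂ) * Jc)).charpoly = (r' * r'ᴴ).charpoly := by
  have hp' : ∀ i, 0 ≤ p i := fun i => (hp i).le
  have hρA : ρ = ensembleMatrix p ψ * (ensembleMatrix p ψ)ᴴ := by
    rw [hρ, ensembleMatrix_mul_conjTranspose hp']
  have hr'A : r' = (ensembleMatrix p ψ)ᴴ * Jc * (ensembleMatrix p ψ).map (starRingEnd ℂ) := by
    ext i j
    rw [hr', conjTranspose_ensembleMatrix_mul_mul_map_apply hp']
  rw [hρA, hr'A]
  exact charpoly_mul_conjTranspose_mul_map_star _ _ Jc_conjTranspose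

/-- For `ρ = Σᵢ pᵢ |ψᵢ⟩⟨ψᵢ|` built from four linearly independent unit vectors
with positive weights, the characteristic polynomial of `ρ ρ̃` (with
`ρ̃ = J ρ̄ J`) equals that of `r′ (r′)†`, where
`r′_{ij} = √(p_i p_j) ⟨ψ_i| J |ψ_j*⟩`. -/
theorem charpoly_rho_rhoTilde_eq
    (ψ : Fin 4 → Fin 4 → ℂ) (hind : LinearIndependent ℂ ψ)
    (hψ : ∀ i, star (ψ i) ⬝ᵥ ψ i = 1)
    (p : Fin 4 → ℝ) (hp : ∀ i, 0 < p i)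
    (ρ : Matrix (Fin 4) (Fin 4) ℂ)
    (hρ : ρ = ∑ i, (p i : ℂ) • vecMulVec (ψ i) (star (ψ i)))
    (r' : Matrix (Fin 4) (Fin 4) ℂ)
    (hr' : ∀ i j, r' i j = (Real.sqrt (p i * p j) : ℂ) * (star (ψ i) ⬝ᵥ (Jc *ᵥ star (ψ j)))) :
    (ρ * (Jc * ρ.map (starRingEnd ℂ) * Jc)).charpoly = (r' * r'ᴴ).charpoly :=
  charpoly_rho_rhoTilde_eq_general ψ p hp ρ hρ r' hr'

end
end

section
/- Let σ × σ denote the product of the uniform probability measures on S³ × S³, and set r₁₁(x) = 2(x₂x₃ − x₁x₄), r₂₂(y) = 2(y₂y₃ − y₁y₄), r₁₂(x,y) = x₂y₃ + x₃y₂ − x₁y₄ − x₄y₁. Then the measure of the optimal set { (x,y) : r₁₁(x)r₂₂(y) > 0 and r₁₂(x,y)² − r₁₁(x)r₂₂(y) > 0 } equals the measure of { (x,y) : r₁₂(x,y)² − r₁₁(x)r₂₂(y) > 0 } minus 1/2. -/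
/-!
Write `r(x) = 2(x₂x₃ − x₁x₄)`, so that `r₁₁ = r₂₂ = r`. Up to a subset of `{r(x) r(y) = 0}`, the
set `{r₁₂² > r₁₁ r₂₂}` is the disjoint union of the optimal set and of `{r(x) r(y) < 0}`, whatever
`r₁₂` is. It therefore suffices that `σ{r = 0} = 0` and `σ{r < 0} = σ{r > 0}`: then both halves
have measure `1/2`, and `(σ × σ){r(x) r(y) < 0} = 2 · (1/2)² = 1/2`.

The symmetry comes from the orthogonal map `x ↦ (−x₁, −x₂, x₃, x₄)`, which negates `r`. For the
zero set, let `R_θ` turn the `(x₂, x₃)`-plane by `θ` and the `(x₁, x₄)`-plane by `2θ`. Integrating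
over `θ` and using invariance (Fubini), `σ{r = 0}` vanishes as soon as, for `σ`-a.e. `x`, the
zeros of `θ ↦ r(R_θ x)` are Lebesgue-null. This function is analytic, and because the two planes
turn at different speeds it is identically zero only for `x = 0`.
-/

open MeasureTheory Matrix Real Set Filter

theorem measure_eq_zero_of_ae_hitting_null {Θ α : Type*} [MeasurableSpace Θ] [MeasurableSpace α]
    {μ : Measure Θ} {ν : Measure α} [SFinite μ] [SFinite ν] [NeZero μ] {T : Θ → α → α}
    (hT : Measurable (Function.uncurry T)) (hpres : ∀ θ, MeasurePreserving (T θ) ν ν)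
    {S : Set α} (hS : MeasurableSet S) (hnull : ∀ᵐ x ∂ν, μ {θ | T θ x ∈ S} = 0) :
    ν S = 0 := by
  have hE : MeasurableSet {p : Θ × α | T p.1 p.2 ∈ S} := hT hS
  have hslices : (μ.prod ν) {p | T p.1 p.2 ∈ S} = ν S * μ univ := by
    have (θ : Θ) : ν (Prod.mk θ ⁻¹' {p : Θ × α | T p.1 p.2 ∈ S}) = ν S :=
      (hpres θ).measure_preimage hS.nullMeasurableSet
    simp_rw [Measure.prod_apply hE, this, lintegral_const]
  have hfibres : (μ.prod ν) {p | T p.1 p.2 ∈ S} = 0 := by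
    rw [Measure.prod_apply_symm hE]
    exact lintegral_eq_zero_of_ae_eq_zero hnull
  simpa [NeZero.ne] using hslices.symm.trans hfibres

theorem volume_setOf_eq_zero_of_analyticOnNhd {φ : ℝ → ℝ} (hφ : AnalyticOnNhd ℝ φ univ)
    (hne : ∃ θ, φ θ ≠ 0) : volume {θ | φ θ = 0} = 0 := by
  have hcod := (hφ.eqOn_zero_or_eventually_ne_zero_of_preconnected isPreconnected_univ).resolve_left
    fun h => hne.elim fun θ hθ => hθ (h (mem_univ θ))
  have hae := ae_restrict_le_codiscreteWithin (μ := volume) MeasurableSet.univ hcod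
  rw [Measure.restrict_univ] at hae
  simpa using ae_iff.1 hae

theorem coeffs_eq_zero_of_forall_trigPoly_eq_zero {A B C D : ℝ}
    (h : ∀ u, A * cos u + B * sin u + C * cos (2 * u) + D * sin (2 * u) = 0) :
    A = 0 ∧ B = 0 ∧ C = 0 ∧ D = 0 := by
  have h₀ := h 0
  have hπ := h π
  have hπ2 := h (π / 2)
  have hπ4 := h (π / 4)
  rw [show 2 * (π / 4) = π / 2 by ring] at hπ4
  simp only [cos_zero, sin_zero, cos_pi, sin_pi, cos_two_pi, sin_two_pi, cos_pi_div_two,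
    sin_pi_div_two, cos_pi_div_four, sin_pi_div_four, mul_zero, mul_one, mul_neg, add_zero,
    zero_add, mul_div_cancel₀ _ (two_ne_zero' ℝ)] at h₀ hπ hπ2 hπ4
  obtain rfl : A = 0 := by linarith
  obtain rfl : C = 0 := by linarith
  obtain rfl : B = 0 := by linarith
  simpa using hπ4

theorem eq_zero_and_eq_zero_of_mul_eq_zero_of_sq_eq_sq {a b : ℝ} (hab : a * b = 0)
    (hsq : a ^ 2 = b ^ 2) : a = 0 ∧ b = 0 := by
  have ha : (a ^ 2) ^ 2 = 0 := by
    calc (a ^ 2) ^ 2 = a ^ 2 * b ^ 2 := by rw [← hsq]; ring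
      _ = (a * b) ^ 2 := by ring
      _ = 0 := by rw [hab]; ring
  have ha : a = 0 := by simpa using ha
  subst ha
  simpa [eq_comm] using hsq

section Halves

variable {α : Type*} [MeasurableSpace α] {σ : Measure α} [IsProbabilityMeasure σ] {f : α → ℝ}

theorem measure_pos_eq_half (hf : Measurable f) (hzero : σ {x | f x = 0} = 0)
    (hsymm : σ {x | f x < 0} = σ {x | 0 < f x}) : σ {x | 0 < f x} = 2⁻¹ := by
  have hsplit : {x | f x = 0}ᶜ = {x | 0 < f x} ∪ {x | f x < 0} := by
    ext x
    exact ne_iff_lt_or_gt.trans or_comm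
  have hdisj : Disjoint {x | 0 < f x} {x | f x < 0} :=
    disjoint_left.2 fun _ h₁ h₂ => lt_asymm (mem_ofPred.1 h₁) h₂
  have htotal : σ {x | 0 < f x} + σ {x | 0 < f x} = 1 := by
    rw [← (prob_compl_eq_one_iff (measurableSet_eq_fun hf measurable_const)).2 hzero, hsplit,
      measure_union hdisj (measurableSet_lt hf measurable_const), hsymm]
  rw [← two_mul] at htotal
  rw [← one_div, ENNReal.eq_div_iff two_ne_zero ENNReal.ofNat_ne_top, htotal]

theorem measure_prod_mul_neg_eq_half (hf : Measurable f) (hzero : σ {x | f x = 0} = 0)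
    (hsymm : σ {x | f x < 0} = σ {x | 0 < f x}) :
    (σ.prod σ) {q | f q.1 * f q.2 < 0} = 2⁻¹ := by
  have hsplit : {q : α × α | f q.1 * f q.2 < 0} =
      {x | 0 < f x} ×ˢ {x | f x < 0} ∪ {x | f x < 0} ×ˢ {x | 0 < f x} := by
    ext q
    simp [mul_neg_iff]
  have hhalf := measure_pos_eq_half hf hzero hsymm
  rw [hsplit, measure_union, Measure.prod_prod, Measure.prod_prod, hsymm, hhalf, ← two_mul,
    ← mul_assoc, ENNReal.mul_inv_cancel two_ne_zero ENNReal.ofNat_ne_top, one_mul]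
  · exact disjoint_left.2 fun _ h₁ h₂ => lt_asymm (mem_ofPred.1 h₁.1) h₂.1
  · exact (measurableSet_lt hf measurable_const).prod (measurableSet_lt measurable_const hf)

end Halves

theorem measure_prod_mul_eq_zero {α β : Type*} [MeasurableSpace α] [MeasurableSpace β]
    {μ : Measure α} {ν : Measure β} [SFinite ν] {f : α → ℝ} {g : β → ℝ}
    (hf : μ {x | f x = 0} = 0) (hg : ν {y | g y = 0} = 0) :
    (μ.prod ν) {q | f q.1 * g q.2 = 0} = 0 := by
  refine measure_mono_null (fun q hq => ?_) (measure_union_null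
    (s := {x | f x = 0} ×ˢ univ) (t := univ ×ˢ {y | g y = 0})
    (by rw [Measure.prod_prod, hf, zero_mul]) (by rw [Measure.prod_prod, hg, mul_zero]))
  simpa [mul_eq_zero] using hq

theorem measure_pos_and_add_measure_neg {β : Type*} [MeasurableSpace β] {μ : Measure β}
    {h : β → ℝ} (hh : Measurable h) (hzero : μ {q | h q = 0} = 0) (c : β → ℝ) :
    μ {q | 0 < h q ∧ 0 < c q ^ 2 - h q} + μ {q | h q < 0} = μ {q | 0 < c q ^ 2 - h q} := by
  have hpos : {q | 0 < c q ^ 2 - h q} ∩ {q | 0 < h q} = {q | 0 < h q ∧ 0 < c q ^ 2 - h q} := by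
    ext q
    simp [and_comm]
  have hnonpos : μ ({q | 0 < c q ^ 2 - h q} \ {q | 0 < h q}) = μ {q | h q < 0} := by
    refine le_antisymm ?_ (measure_mono fun q hq => ⟨?_, ?_⟩)
    · refine (measure_mono fun q hq => ?_).trans
        ((measure_union_le {q | h q < 0} {q | h q = 0}).trans (by rw [hzero, add_zero]))
      simpa [le_iff_lt_or_eq] using hq.2
    · show 0 < c q ^ 2 - h q
      nlinarith [sq_nonneg (c q), show h q < 0 from hq]
    · exact fun h' : 0 < h q => lt_asymm hq h'
  rw [← hpos, ← hnonpos, measure_inter_add_sdiff _ (measurableSet_lt measurable_const hh)]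

section SplitForm

def rForm (x : Fin 4 → ℝ) : ℝ := 2 * (x 1 * x 2 - x 0 * x 3)

theorem measurable_rForm : Measurable rForm := by
  unfold rForm
  fun_prop

noncomputable def doubleRotation (θ : ℝ) : Matrix (Fin 4) (Fin 4) ℝ :=
  !![cos (2 * θ), 0, 0, -sin (2 * θ);
     0, cos θ, -sin θ, 0;
     0, sin θ, cos θ, 0;
     sin (2 * θ), 0, 0, cos (2 * θ)]

theorem doubleRotation_mul_transpose (θ : ℝ) :
    doubleRotation θ * (doubleRotation θ)ᵀ = 1 := by
  have h₁ := sin_sq_add_cos_sq θ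
  have h₂ := sin_sq_add_cos_sq (2 * θ)
  ext i j
  fin_cases i <;> fin_cases j <;>
    simp [doubleRotation, mul_apply, Fin.sum_univ_four, one_apply] <;> linarith

theorem continuous_doubleRotation_mulVec :
    Continuous fun p : ℝ × (Fin 4 → ℝ) => doubleRotation p.1 *ᵥ p.2 := by
  refine continuous_pi fun i => ?_
  fin_cases i <;> simp [doubleRotation, mulVec, dotProduct, Fin.sum_univ_four] <;> fun_prop

theorem rForm_doubleRotation_mulVec (θ : ℝ) (x : Fin 4 → ℝ) :
    rForm (doubleRotation θ *ᵥ x) =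
      2 * (x 1 * x 2) * cos (2 * θ) + (x 1 ^ 2 - x 2 ^ 2) * sin (2 * θ)
        + -(2 * (x 0 * x 3)) * cos (2 * (2 * θ))
        + -(x 0 ^ 2 - x 3 ^ 2) * sin (2 * (2 * θ)) := by
  simp only [rForm, mulVec, dotProduct, doubleRotation, cos_two_mul', sin_two_mul, of_apply,
    cons_val', cons_val_fin_one, cons_val_one, cons_val_zero, cons_val, Fin.sum_univ_four,
    zero_mul, zero_add, add_zero]
  ring

theorem eq_zero_of_forall_rForm_doubleRotation_mulVec_eq_zero {x : Fin 4 → ℝ}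
    (h : ∀ θ, rForm (doubleRotation θ *ᵥ x) = 0) : x = 0 := by
  obtain ⟨h₁₂, hsq₁₂, h₀₃, hsq₀₃⟩ := coeffs_eq_zero_of_forall_trigPoly_eq_zero fun u => by
    have hu := h (u / 2)
    rwa [rForm_doubleRotation_mulVec, show 2 * (u / 2) = u by ring] at hu
  obtain ⟨hx₁, hx₂⟩ := eq_zero_and_eq_zero_of_mul_eq_zero_of_sq_eq_sq (a := x 1) (b := x 2)
    (by linarith) (by linarith)
  obtain ⟨hx₀, hx₃⟩ := eq_zero_and_eq_zero_of_mul_eq_zero_of_sq_eq_sq (a := x 0) (b := x 3)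
    (by linarith) (by linarith)
  ext i
  fin_cases i <;> assumption

def flipMatrix : Matrix (Fin 4) (Fin 4) ℝ := diagonal ![-1, -1, 1, 1]

theorem flipMatrix_mul_transpose : flipMatrix * flipMatrixᵀ = 1 := by
  ext i j
  fin_cases i <;> fin_cases j <;> simp [flipMatrix]

theorem rForm_flipMatrix_mulVec (x : Fin 4 → ℝ) : rForm (flipMatrix *ᵥ x) = -rForm x := by
  simp only [rForm, flipMatrix, mulVec_diagonal, cons_val_one, cons_val_zero, cons_val]
  ring

variable {σ : Measure (Fin 4 → ℝ)}

theorem measurePreserving_mulVec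
    (hinv : ∀ R : Matrix (Fin 4) (Fin 4) ℝ, R * Rᵀ = 1 → Measure.map (fun y => R *ᵥ y) σ = σ)
    {R : Matrix (Fin 4) (Fin 4) ℝ} (hR : R * Rᵀ = 1) : MeasurePreserving (R *ᵥ ·) σ σ :=
  ⟨(continuous_const.matrix_mulVec continuous_id).measurable, hinv R hR⟩

theorem measure_rForm_eq_zero [IsProbabilityMeasure σ]
    (hsupp : σ {y : Fin 4 → ℝ | ∑ i, y i ^ 2 = 1} = 1)
    (hinv : ∀ R : Matrix (Fin 4) (Fin 4) ℝ, R * Rᵀ = 1 → Measure.map (fun y => R *ᵥ y) σ = σ) :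
    σ {x | rForm x = 0} = 0 := by
  have hsphere : ∀ᵐ x ∂σ, ∑ i, x i ^ 2 = 1 := mem_ae_iff.2 ((prob_compl_eq_zero_iff
    (measurableSet_eq_fun (by fun_prop) measurable_const)).2 hsupp)
  refine measure_eq_zero_of_ae_hitting_null (μ := volume)
    continuous_doubleRotation_mulVec.measurable
    (fun θ => measurePreserving_mulVec hinv (doubleRotation_mul_transpose θ))
    (measurable_rForm (measurableSet_singleton 0)) ?_
  filter_upwards [hsphere] with x hx
  refine volume_setOf_eq_zero_of_analyticOnNhd (fun θ _ => ?_) ?_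
  · simp only [rForm_doubleRotation_mulVec]
    fun_prop
  · by_contra! h
    simp [eq_zero_of_forall_rForm_doubleRotation_mulVec_eq_zero h] at hx

theorem measure_rForm_neg_eq_pos
    (hinv : ∀ R : Matrix (Fin 4) (Fin 4) ℝ, R * Rᵀ = 1 → Measure.map (fun y => R *ᵥ y) σ = σ) :
    σ {x | rForm x < 0} = σ {x | 0 < rForm x} := by
  rw [← (measurePreserving_mulVec hinv flipMatrix_mul_transpose).measure_preimage
    (measurableSet_lt measurable_const measurable_rForm).nullMeasurableSet]
  simp [preimage, rForm_flipMatrix_mulVec]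

end SplitForm

theorem measure_optimal_set_eq_general
    (σ : Measure (Fin 4 → ℝ)) [IsProbabilityMeasure σ]
    (hsupp : σ {y : Fin 4 → ℝ | ∑ i, y i ^ 2 = 1} = 1)
    (hinv : ∀ R : Matrix (Fin 4) (Fin 4) ℝ, R * Rᵀ = 1 →
      Measure.map (fun y => R *ᵥ y) σ = σ)
    (r₁₁ r₂₂ : (Fin 4 → ℝ) → ℝ) (r₁₂ : (Fin 4 → ℝ) → (Fin 4 → ℝ) → ℝ)
    (hr₁₁ : ∀ x, r₁₁ x = 2 * (x 1 * x 2 - x 0 * x 3))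
    (hr₂₂ : ∀ y, r₂₂ y = 2 * (y 1 * y 2 - y 0 * y 3)) :
    ((σ.prod σ) {q : (Fin 4 → ℝ) × (Fin 4 → ℝ) |
        0 < r₁₁ q.1 * r₂₂ q.2 ∧
        0 < r₁₂ q.1 q.2 ^ 2 - r₁₁ q.1 * r₂₂ q.2}).toReal =
      ((σ.prod σ) {q : (Fin 4 → ℝ) × (Fin 4 → ℝ) |
        0 < r₁₂ q.1 q.2 ^ 2 - r₁₁ q.1 * r₂₂ q.2}).toReal - 1 / 2 := by
  obtain rfl : r₁₁ = rForm := funext hr₁₁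
  obtain rfl : r₂₂ = rForm := funext hr₂₂
  have hzero := measure_rForm_eq_zero hsupp hinv
  have hprod : Measurable fun q : (Fin 4 → ℝ) × (Fin 4 → ℝ) => rForm q.1 * rForm q.2 :=
    (measurable_rForm.comp measurable_fst).mul (measurable_rForm.comp measurable_snd)
  rw [← measure_pos_and_add_measure_neg hprod (measure_prod_mul_eq_zero hzero hzero)
      fun q => r₁₂ q.1 q.2,
    measure_prod_mul_neg_eq_half measurable_rForm hzero (measure_rForm_neg_eq_pos hinv),
    ENNReal.toReal_add (measure_ne_top _ _) (by simp)]
  norm_num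

/-- The fraction of optimal pairs: with `r₁₁(x) = 2(x₂x₃ − x₁x₄)`,
`r₂₂(y) = 2(y₂y₃ − y₁y₄)` and `r₁₂(x,y) = x₂y₃ + x₃y₂ − x₁y₄ − x₄y₁`, the
`σ × σ`-measure of `{r₁₁ r₂₂ > 0 and r₁₂² − r₁₁ r₂₂ > 0}` equals the measure of
`{r₁₂² − r₁₁ r₂₂ > 0}` minus `1/2`. -/
theorem measure_optimal_set_eq
    (σ : Measure (Fin 4 → ℝ)) [IsProbabilityMeasure σ]
    (hsupp : σ {y : Fin 4 → ℝ | ∑ i, y i ^ 2 = 1} = 1)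
    (hinv : ∀ R : Matrix (Fin 4) (Fin 4) ℝ, R * Rᵀ = 1 →
      Measure.map (fun y => R *ᵥ y) σ = σ)
    (r₁₁ r₂₂ : (Fin 4 → ℝ) → ℝ) (r₁₂ : (Fin 4 → ℝ) → (Fin 4 → ℝ) → ℝ)
    (hr₁₁ : ∀ x, r₁₁ x = 2 * (x 1 * x 2 - x 0 * x 3))
    (hr₂₂ : ∀ y, r₂₂ y = 2 * (y 1 * y 2 - y 0 * y 3))
    (hr₁₂ : ∀ x y, r₁₂ x y = x 1 * y 2 + x 2 * y 1 - x 0 * y 3 - x 3 * y 0) :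
    ((σ.prod σ) {q : (Fin 4 → ℝ) × (Fin 4 → ℝ) |
        0 < r₁₁ q.1 * r₂₂ q.2 ∧
        0 < r₁₂ q.1 q.2 ^ 2 - r₁₁ q.1 * r₂₂ q.2}).toReal =
      ((σ.prod σ) {q : (Fin 4 → ℝ) × (Fin 4 → ℝ) |
        0 < r₁₂ q.1 q.2 ^ 2 - r₁₁ q.1 * r₂₂ q.2}).toReal - 1 / 2 :=
  measure_optimal_set_eq_general σ hsupp hinv r₁₁ r₂₂ r₁₂ hr₁₁ hr₂₂
end
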